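/- arXiv:1107.3262 — 2 statements merged into one kernel-verified Lean document; each statement's English description precedes it below -/
import Mathlib

section
/- Let σ ≤ τ in the consecutive pattern poset. Then: (1) if |τ|−|σ| > 2 and σ ≤ x(τ) and x(τ) ≰ i(τ), then μ(σ,τ) = μ(σ,x(τ)); (2) if |τ|−|σ| = 2, τ is not monotone, and σ = i(τ) or σ = x(τ), then μ(σ,τ) = 1; (3) if |τ|−|σ| < 2, then μ(σ,τ) = (−1)^{|τ|−|σ|}; (4) in all remaining cases (σ ≤ τ with none of the above conditions holding), μ(σ,τ) = 0. -/
/-!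
Write `P` and `S` for the prefix and the suffix of `τ` of length `|τ| - 1`. Every proper pattern
of `τ` lies below `P` or `S`; a common pattern of `P` and `S` either occurs in the interior of `τ`
or occurs both as a prefix and as a suffix of `τ`, hence lies below `i(τ)` or `x(τ)`; and when
`x(τ) ≰ i(τ)`, the exterior `x(τ)` is the only pattern of `x(τ)` not below `i(τ)`.
Inclusion–exclusion over `[σ, τ] = {τ} ∪ [σ, P] ∪ [σ, S]` therefore gives, for `σ < τ`,
  `μ(σ, τ) = [σ = i(τ)] - [σ = P] - [σ = S] + [σ ≤ x(τ) ≰ i(τ)] μ(σ, x(τ))`,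
and the four cases follow by comparing lengths, using that `τ` is monotone exactly when
`P = S`, i.e. when `x(τ) = P`.
-/

/-- Standardization of a list of distinct naturals: replace each entry by its rank
(the number of entries less than or equal to it). -/
def stdize (s : List ℕ) : List ℕ := s.map (fun x => (s.filter (· ≤ x)).length)

/-- All contiguous subwords (infixes) of a list. -/
def infixes (l : List ℕ) : List (List ℕ) := l.inits.flatMap List.tails

/-- `l` is a permutation of `{1,…,d}` where `d = l.length ≥ 1`; these are the
elements of the consecutive pattern poset. -/
def IsPermList (l : List ℕ) : Prop := l ≠ [] ∧ l.Perm (List.range' 1 l.length)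

/-- Consecutive pattern containment: `σ ≤ τ` iff `σ` is the standardization of
some contiguous subsequence of `τ`. -/
def PattLE (σ τ : List ℕ) : Prop := σ ∈ (infixes τ).map stdize

instance (σ τ : List ℕ) : Decidable (PattLE σ τ) :=
  inferInstanceAs (Decidable (σ ∈ (infixes τ).map stdize))

/-- A permutation is monotone if its letters strictly increase or strictly decrease. -/
def MonotoneList (l : List ℕ) : Prop := l.Chain' (· < ·) ∨ l.Chain' (· > ·)

/-- The interior `i(τ)`: standardization of `τ` with first and last letters removed. -/
def pattInterior (τ : List ℕ) : List ℕ := stdize τ.tail.dropLast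

/-- Length of the longest proper prefix of `τ` whose standardization is also the
standardization of a suffix of `τ`. -/
def extLen (τ : List ℕ) : ℕ :=
  Nat.findGreatest (fun k => stdize (τ.take k) = stdize (τ.drop (τ.length - k))) (τ.length - 1)

/-- The exterior `x(τ)`: the longest permutation that is both a proper prefix and a
suffix of `τ`. -/
def pattExterior (τ : List ℕ) : List ℕ := stdize (τ.take (extLen τ))

/-- The closed interval `[σ,τ]` in the consecutive pattern poset, as a `Finset`. -/
def pattInterval (σ τ : List ℕ) : Finset (List ℕ) :=
  ((infixes τ).map stdize).toFinset.filter (fun z => PattLE σ z)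

/-- The open interval `(σ,τ)` in the consecutive pattern poset, as a `Finset`. -/
def openPattInterval (σ τ : List ℕ) : Finset (List ℕ) :=
  ((infixes τ).map stdize).toFinset.filter (fun z => PattLE σ z ∧ z ≠ σ ∧ z ≠ τ)

/-- `τ` covers `σ` in the consecutive pattern poset: `σ < τ` and no element lies
strictly between them. -/
def CoveredBy (σ τ : List ℕ) : Prop :=
  PattLE σ τ ∧ σ ≠ τ ∧ ¬ ∃ ρ, IsPermList ρ ∧ PattLE σ ρ ∧ PattLE ρ τ ∧ ρ ≠ σ ∧ ρ ≠ τ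

/-- `c` is a maximal chain of the interval `[σ,τ]`: it starts at `τ`, ends at `σ`,
and each element covers the next. -/
def IsMaxChainPatt (σ τ : List ℕ) (c : List (List ℕ)) : Prop :=
  c.head? = some τ ∧ c.getLast? = some σ ∧ c.Chain' (fun a b => CoveredBy b a)

open List

section Standardization

lemma ne_of_length_ne {a b : List ℕ} (h : a.length ≠ b.length) : a ≠ b :=
  mt (congrArg length) h

lemma IsPermList.nodup {τ : List ℕ} (hτ : IsPermList τ) : τ.Nodup :=
  hτ.2.nodup_iff.2 nodup_range'

@[simp]
lemma length_stdize (l : List ℕ) : (stdize l).length = l.length := by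
  simp [stdize]

lemma getD_stdize {l : List ℕ} {i : ℕ} (hi : i < l.length) :
    (stdize l).getD i 0 = (l.filter (· ≤ l.getD i 0)).length := by
  rw [getD_eq_getElem _ _ (by simpa using hi), getD_eq_getElem _ _ hi]
  simp [stdize]

lemma getD_mem {l : List ℕ} {i : ℕ} (hi : i < l.length) : l.getD i 0 ∈ l := by
  rw [getD_eq_getElem _ _ hi]
  exact getElem_mem _

lemma length_filter_le_mono (l : List ℕ) {a b : ℕ} (hab : a ≤ b) :
    (l.filter (· ≤ a)).length ≤ (l.filter (· ≤ b)).length :=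
  (monotone_filter_right l (by simp only [decide_eq_true_eq]; omega)).length_le

lemma length_filter_le_lt {l : List ℕ} {a b : ℕ} (hab : a < b) (hb : b ∈ l) :
    (l.filter (· ≤ a)).length < (l.filter (· ≤ b)).length := by
  have hsub : l.filter (· ≤ a) <+ l.filter (· ≤ b) :=
    monotone_filter_right l (by simp only [decide_eq_true_eq]; omega)
  refine lt_of_le_of_ne hsub.length_le fun hlen => ?_
  have hbmem : b ∈ l.filter (· ≤ b) := mem_filter.2 ⟨hb, by simp⟩
  rw [← hsub.eq_of_length hlen, mem_filter] at hbmem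
  simp at hbmem
  omega

/-- `getD` is only evaluated at valid positions, so its default is irrelevant. -/
def OrderIsomorphic (l l' : List ℕ) : Prop :=
  l.length = l'.length ∧ ∀ i j, i < l.length → j < l.length →
    (l.getD i 0 < l.getD j 0 ↔ l'.getD i 0 < l'.getD j 0)

lemma OrderIsomorphic.symm {l l' : List ℕ} (h : OrderIsomorphic l l') : OrderIsomorphic l' l :=
  ⟨h.1.symm, fun i j hi hj => (h.2 i j (h.1 ▸ hi) (h.1 ▸ hj)).symm⟩

lemma orderIsomorphic_stdize (l : List ℕ) : OrderIsomorphic l (stdize l) := by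
  refine ⟨(length_stdize l).symm, fun i j hi hj => ?_⟩
  rw [getD_stdize hi, getD_stdize hj]
  refine ⟨fun h => length_filter_le_lt h (getD_mem hj), fun h => ?_⟩
  by_contra hle
  exact absurd (length_filter_le_mono l (not_lt.1 hle)) (not_le.2 h)

lemma countP_eq_countP_range (l : List ℕ) (p : ℕ → Bool) :
    l.countP p = (range l.length).countP (fun j => p (l.getD j 0)) := by
  have hl : (range l.length).map (fun j => l.getD j 0) = l :=
    ext_getElem (by simp) fun i _ h => by simp [getElem?_eq_getElem h]
  conv_lhs => rw [← hl]
  rw [countP_map]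
  rfl

lemma stdize_eq_of_orderIsomorphic {l l' : List ℕ} (h : OrderIsomorphic l l') :
    stdize l = stdize l' := by
  refine ext_getElem (by simp [h.1]) fun i h1 h2 => ?_
  have hi : i < l.length := by simpa using h1
  have hi' : i < l'.length := h.1 ▸ hi
  rw [← getD_eq_getElem _ 0 h1, ← getD_eq_getElem _ 0 h2, getD_stdize hi, getD_stdize hi',
    ← countP_eq_length_filter, ← countP_eq_length_filter, countP_eq_countP_range l,
    countP_eq_countP_range l', ← h.1]
  refine countP_congr fun j hj => ?_
  rw [mem_range] at hj
  have := h.2 i j hi hj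
  have := h.2 j i hj hi
  simp only [decide_eq_true_eq]
  omega

lemma stdize_eq_stdize_iff {l l' : List ℕ} (hlen : l.length = l'.length) :
    stdize l = stdize l' ↔ OrderIsomorphic l l' := by
  refine ⟨fun h => ⟨hlen, fun i j hi hj => ?_⟩, stdize_eq_of_orderIsomorphic⟩
  rw [(orderIsomorphic_stdize l).2 i j hi hj, h,
    ← (orderIsomorphic_stdize l').2 i j (hlen ▸ hi) (hlen ▸ hj)]

@[simp]
lemma stdize_stdize (l : List ℕ) : stdize (stdize l) = stdize l :=
  stdize_eq_of_orderIsomorphic (orderIsomorphic_stdize l).symm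

lemma countP_le_range' {v n : ℕ} (h : v ≤ n) : (range' 1 n).countP (· ≤ v) = v := by
  induction n with
  | zero => simp_all
  | succ m ih =>
    rw [range'_concat, countP_append]
    rcases Nat.lt_or_ge v (m + 1) with hv | hv
    · simp [ih (by omega), show ¬ 1 + m ≤ v by omega]
    · obtain rfl : v = m + 1 := by omega
      rw [countP_eq_length.2 fun a ha => by have := mem_range'_1.1 ha; simp; omega]
      simp
      omega

lemma stdize_eq_self {l : List ℕ} (h : IsPermList l) : stdize l = l := by
  refine ext_getElem (length_stdize l) fun i h1 h2 => ?_
  rw [← getD_eq_getElem _ 0 h1, ← getD_eq_getElem _ 0 h2, getD_stdize h2,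
    ← countP_eq_length_filter, h.2.countP_eq]
  have := mem_range'_1.1 (h.2.mem_iff.1 (getD_mem h2))
  exact countP_le_range' (by omega)

lemma nodup_stdize {l : List ℕ} (h : l.Nodup) : (stdize l).Nodup := by
  refine h.map_on fun x hx y hy hxy => ?_
  by_contra hne
  rcases lt_or_gt_of_ne hne with hlt | hlt
  · exact (length_filter_le_lt hlt hy).ne hxy
  · exact (length_filter_le_lt hlt hx).ne' hxy

lemma isPermList_stdize {l : List ℕ} (hne : l ≠ []) (hnd : l.Nodup) : IsPermList (stdize l) := by
  refine ⟨by simpa [stdize] using hne, ?_⟩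
  have hrange : (range' 1 l.length).Nodup := nodup_range'
  refine perm_of_nodup_nodup_toFinset_eq (nodup_stdize hnd) (by simpa using hrange)
    (Finset.eq_of_subset_of_card_le (fun x hx => ?_) ?_)
  · simp only [mem_toFinset, stdize, mem_map, length_map, mem_range'_1] at hx ⊢
    obtain ⟨a, ha, rfl⟩ := hx
    have := length_filter_le (· ≤ a) l
    exact ⟨length_pos_of_mem (mem_filter.2 ⟨ha, by simp⟩), by omega⟩
  · rw [toFinset_card_of_nodup (nodup_stdize hnd), toFinset_card_of_nodup (by simpa using hrange)]
    simp

end Standardization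

section Containment

lemma mem_infixes {u l : List ℕ} : u ∈ infixes l ↔ u <:+: l := by
  simp only [infixes, mem_flatMap, mem_inits, mem_tails, infix_iff_suffix_prefix]
  tauto

lemma pattLE_iff {σ τ : List ℕ} : PattLE σ τ ↔ ∃ u, u <:+: τ ∧ stdize u = σ := by
  simp only [PattLE, mem_map, mem_infixes]

lemma pattLE_stdize_of_infix {u τ : List ℕ} (h : u <:+: τ) : PattLE (stdize u) τ :=
  pattLE_iff.2 ⟨u, h, rfl⟩

lemma exists_eq_window_of_infix {u l : List ℕ} (h : u <:+: l) :
    ∃ a, a + u.length ≤ l.length ∧ u = (l.drop a).take u.length := by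
  obtain ⟨s, t, rfl⟩ := h
  refine ⟨s.length, by simp, ?_⟩
  rw [append_assoc, drop_left, take_left]

lemma window_infix (l : List ℕ) (a m : ℕ) : (l.drop a).take m <:+: l :=
  ((l.drop a).take_prefix m).isInfix.trans (l.drop_suffix a).isInfix

lemma getD_window {l : List ℕ} {a m i : ℕ} (h : i < ((l.drop a).take m).length) :
    ((l.drop a).take m).getD i 0 = l.getD (a + i) 0 := by
  simp only [length_take, length_drop] at h
  rw [getD_eq_getElem _ 0 (by simp; omega), getD_eq_getElem _ 0 (by omega), getElem_take,
    getElem_drop]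

lemma OrderIsomorphic.window {l l' : List ℕ} (h : OrderIsomorphic l l') (a m : ℕ) :
    OrderIsomorphic ((l.drop a).take m) ((l'.drop a).take m) := by
  have hlen : ((l.drop a).take m).length = ((l'.drop a).take m).length := by simp [h.1]
  refine ⟨hlen, fun i j hi hj => ?_⟩
  rw [getD_window hi, getD_window hj, getD_window (hlen ▸ hi), getD_window (hlen ▸ hj)]
  simp only [length_take, length_drop] at hi hj
  exact h.2 (a + i) (a + j) (by omega) (by omega)

lemma stdize_window_stdize (l : List ℕ) (a m : ℕ) :
    stdize (((stdize l).drop a).take m) = stdize ((l.drop a).take m) :=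
  stdize_eq_of_orderIsomorphic ((orderIsomorphic_stdize l).window a m).symm

lemma stdize_take_eq_of_stdize_eq {l l' : List ℕ} (h : stdize l = stdize l') (m : ℕ) :
    stdize (l.take m) = stdize (l'.take m) := by
  have hl := stdize_window_stdize l 0 m
  have hl' := stdize_window_stdize l' 0 m
  rw [h] at hl
  simpa using hl.symm.trans hl'

lemma pattLE_stdize_iff {z l : List ℕ} : PattLE z (stdize l) ↔ ∃ v, v <:+: l ∧ stdize v = z := by
  refine ⟨fun h => ?_, fun ⟨v, hv, hvz⟩ => ?_⟩
  · obtain ⟨u, hu, rfl⟩ := pattLE_iff.1 h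
    obtain ⟨a, -, hu⟩ := exists_eq_window_of_infix hu
    refine ⟨(l.drop a).take u.length, window_infix l a _, ?_⟩
    rw [hu, stdize_window_stdize, ← hu]
  · obtain ⟨a, -, hv⟩ := exists_eq_window_of_infix hv
    refine pattLE_iff.2 ⟨((stdize l).drop a).take v.length, window_infix _ a _, ?_⟩
    rw [stdize_window_stdize, ← hv, hvz]

lemma pattLE_stdize_stdize_of_infix {u l : List ℕ} (h : u <:+: l) :
    PattLE (stdize u) (stdize l) :=
  pattLE_stdize_iff.2 ⟨u, h, rfl⟩

lemma pattLE_trans {a b c : List ℕ} (hab : PattLE a b) (hbc : PattLE b c) : PattLE a c := by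
  obtain ⟨u, hu, rfl⟩ := pattLE_iff.1 hbc
  obtain ⟨v, hv, rfl⟩ := pattLE_stdize_iff.1 hab
  exact pattLE_stdize_of_infix (hv.trans hu)

lemma pattLE_refl {σ : List ℕ} (hσ : IsPermList σ) : PattLE σ σ := by
  simpa [stdize_eq_self hσ] using pattLE_stdize_of_infix (infix_refl σ)

lemma PattLE.length_le {σ τ : List ℕ} (h : PattLE σ τ) : σ.length ≤ τ.length := by
  obtain ⟨u, hu, rfl⟩ := pattLE_iff.1 h
  simpa using hu.length_le

lemma PattLE.eq_stdize_of_length_eq {σ τ : List ℕ} (h : PattLE σ τ)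
    (hlen : σ.length = τ.length) : σ = stdize τ := by
  obtain ⟨u, hu, rfl⟩ := pattLE_iff.1 h
  rw [hu.sublist.eq_of_length (by simpa using hlen)]

lemma PattLE.eq_of_length_eq {σ τ : List ℕ} (h : PattLE σ τ) (hτ : IsPermList τ)
    (hlen : σ.length = τ.length) : σ = τ := by
  rw [h.eq_stdize_of_length_eq hlen, stdize_eq_self hτ]

lemma PattLE.isPermList {σ l : List ℕ} (h : PattLE σ (stdize l)) (hσ : IsPermList σ)
    (hl : l.Nodup) : IsPermList (stdize l) := by
  refine isPermList_stdize (fun hnil => hσ.1 ?_) hl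
  simpa [hnil, stdize] using h.length_le

end Containment

section PrefixSuffix

lemma infix_dropLast_or_infix_tail {v τ : List ℕ} (h : v <:+: τ) (hlt : v.length < τ.length) :
    v <:+: τ.dropLast ∨ v <:+: τ.tail := by
  obtain ⟨s, t, rfl⟩ := h
  rcases eq_nil_or_concat t with rfl | ⟨t, b, rfl⟩
  · obtain ⟨a, s, rfl⟩ := exists_cons_of_ne_nil (by rintro rfl; simp at hlt : s ≠ [])
    exact Or.inr ⟨s, [], by simp⟩
  · exact Or.inl ⟨s, t, by simp [← append_assoc]⟩

lemma PattLE.pattLE_dropLast_or_pattLE_tail {z τ : List ℕ} (h : PattLE z τ)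
    (hlt : z.length < τ.length) : PattLE z (stdize τ.dropLast) ∨ PattLE z (stdize τ.tail) := by
  obtain ⟨u, hu, rfl⟩ := pattLE_iff.1 h
  rw [length_stdize] at hlt
  exact (infix_dropLast_or_infix_tail hu hlt).imp pattLE_stdize_stdize_of_infix
    pattLE_stdize_stdize_of_infix

lemma dropLast_infix (τ : List ℕ) : τ.dropLast <:+: τ :=
  (dropLast_prefix τ).isInfix

lemma tail_infix (τ : List ℕ) : τ.tail <:+: τ :=
  (tail_suffix τ).isInfix

lemma pattInterior_pattLE_dropLast (τ : List ℕ) : PattLE (pattInterior τ) (stdize τ.dropLast) := by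
  rw [pattInterior, ← tail_dropLast]
  exact pattLE_stdize_stdize_of_infix (tail_infix _)

lemma pattInterior_pattLE_tail (τ : List ℕ) : PattLE (pattInterior τ) (stdize τ.tail) :=
  pattLE_stdize_stdize_of_infix (dropLast_infix _)

lemma length_pattInterior (τ : List ℕ) : (pattInterior τ).length = τ.length - 2 := by
  simp [pattInterior]
  omega

lemma extLen_le (τ : List ℕ) : extLen τ ≤ τ.length - 1 :=
  Nat.findGreatest_le _

lemma stdize_take_extLen (τ : List ℕ) :
    stdize (τ.take (extLen τ)) = stdize (τ.drop (τ.length - extLen τ)) :=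
  Nat.findGreatest_spec (P := fun k => stdize (τ.take k) = stdize (τ.drop (τ.length - k)))
    (Nat.zero_le _) (by simp)

lemma le_extLen {τ : List ℕ} {j : ℕ} (hj : j ≤ τ.length - 1)
    (h : stdize (τ.take j) = stdize (τ.drop (τ.length - j))) : j ≤ extLen τ :=
  Nat.le_findGreatest hj h

lemma length_pattExterior (τ : List ℕ) : (pattExterior τ).length = extLen τ := by
  have := extLen_le τ
  simp [pattExterior]
  omega

lemma pattExterior_pattLE_dropLast (τ : List ℕ) : PattLE (pattExterior τ) (stdize τ.dropLast) := by
  rw [pattExterior, dropLast_eq_take]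
  exact pattLE_stdize_stdize_of_infix (take_prefix_take_left (extLen_le τ)).isInfix

lemma pattExterior_pattLE_tail {τ : List ℕ} (hne : τ ≠ []) :
    PattLE (pattExterior τ) (stdize τ.tail) := by
  have := extLen_le τ
  have := length_pos_of_ne_nil hne
  rw [pattExterior, stdize_take_extLen, ← drop_one,
    show τ.length - extLen τ = 1 + (τ.length - extLen τ - 1) by omega, ← drop_drop]
  exact pattLE_stdize_stdize_of_infix (drop_suffix _ _).isInfix

lemma extLen_eq_iff {τ : List ℕ} (hne : τ ≠ []) :
    extLen τ = τ.length - 1 ↔ stdize τ.dropLast = stdize τ.tail := by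
  have hsub : τ.length - (τ.length - 1) = 1 := by have := length_pos_of_ne_nil hne; omega
  have hspec : stdize (τ.take (τ.length - 1)) = stdize (τ.drop (τ.length - (τ.length - 1))) ↔
      stdize τ.dropLast = stdize τ.tail := by
    rw [hsub, drop_one, dropLast_eq_take]
  refine ⟨fun h => hspec.1 (h ▸ stdize_take_extLen τ), fun h => ?_⟩
  exact le_antisymm (extLen_le τ) (le_extLen le_rfl (hspec.2 h))

lemma pattExterior_eq_of_extLen_eq {τ : List ℕ} (h : extLen τ = τ.length - 1) :
    pattExterior τ = stdize τ.dropLast := by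
  rw [pattExterior, h, dropLast_eq_take]

end PrefixSuffix

section Occurrences

lemma prefix_or_infix_tail_dropLast {v τ : List ℕ} (h : v <:+: τ.dropLast) :
    v <+: τ ∨ v <:+: τ.tail.dropLast := by
  obtain ⟨s, t, hst⟩ := h
  rcases eq_or_ne s [] with rfl | hs
  · exact Or.inl (IsPrefix.trans ⟨t, by simpa using hst⟩ (dropLast_prefix τ))
  · obtain ⟨a, s, rfl⟩ := exists_cons_of_ne_nil hs
    refine Or.inr ⟨s, t, ?_⟩
    rw [← tail_dropLast, ← hst]
    simp

lemma suffix_or_infix_tail_dropLast {v τ : List ℕ} (h : v <:+: τ.tail) :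
    v <:+ τ ∨ v <:+: τ.tail.dropLast := by
  obtain ⟨s, t, hst⟩ := h
  rcases eq_or_ne t [] with rfl | ht
  · exact Or.inl (IsSuffix.trans ⟨s, by simpa using hst⟩ (tail_suffix τ))
  · exact Or.inr ⟨s, t.dropLast, by rw [← hst, dropLast_append_of_ne_nil ht]⟩

lemma window_infix_tail_dropLast {τ : List ℕ} {a m : ℕ} (ha : 1 ≤ a) (ham : a + m < τ.length) :
    (τ.drop a).take m <:+: τ.tail.dropLast := by
  obtain ⟨b, τ, rfl⟩ := exists_cons_of_ne_nil (ne_nil_of_length_pos (by omega : 0 < τ.length))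
  obtain ⟨a, rfl⟩ := Nat.exists_eq_add_of_le' ha
  simp only [length_cons] at ham
  have hne : τ.drop (a + m) ≠ [] := by simp; omega
  refine ⟨τ.take a, (τ.drop (a + m)).dropLast, ?_⟩
  rw [tail_cons, drop_succ_cons, ← dropLast_append_of_ne_nil hne, append_assoc, ← drop_drop,
    take_append_drop, take_append_drop]

lemma PattLE.pattLE_pattExterior_or_pattLE_pattInterior {z τ : List ℕ}
    (hP : PattLE z (stdize τ.dropLast)) (hS : PattLE z (stdize τ.tail)) :
    PattLE z (pattExterior τ) ∨ PattLE z (pattInterior τ) := by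
  obtain ⟨v, hv, rfl⟩ := pattLE_stdize_iff.1 hP
  obtain ⟨v', hv', hv'v⟩ := pattLE_stdize_iff.1 hS
  rcases prefix_or_infix_tail_dropLast hv with hpre | hin
  · rcases suffix_or_infix_tail_dropLast hv' with hsuf | hin
    · -- `v` occurs both as a prefix and as a suffix of `τ`, so it is at most as long as `x(τ)`
      have hlen : v'.length = v.length := by simpa using congrArg length hv'v
      have hvτ : v.length ≤ τ.length - 1 := by simpa using hv.length_le
      have hext : v.length ≤ extLen τ := le_extLen hvτ <| by
        rw [← prefix_iff_eq_take.1 hpre, ← hlen, ← suffix_iff_eq_drop.1 hsuf, hv'v]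
      rw [prefix_iff_eq_take.1 hpre]
      exact Or.inl (pattLE_stdize_stdize_of_infix (take_prefix_take_left hext).isInfix)
    · exact Or.inr (hv'v ▸ pattLE_stdize_stdize_of_infix hin)
  · exact Or.inr (pattLE_stdize_stdize_of_infix hin)

lemma eq_pattExterior_of_not_pattLE_pattInterior {z τ : List ℕ}
    (hzX : PattLE z (pattExterior τ)) (hzI : ¬ PattLE z (pattInterior τ)) :
    z = pattExterior τ := by
  have he := extLen_le τ
  obtain ⟨v, hv, rfl⟩ := pattLE_stdize_iff.1 hzX
  have hvP : v <:+: τ.dropLast :=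
    hv.trans (dropLast_eq_take ▸ take_prefix_take_left he).isInfix
  have hpre : v <+: τ := (prefix_or_infix_tail_dropLast hvP).resolve_right
    fun hin => hzI (pattLE_stdize_stdize_of_infix hin)
  have hvlen : v.length ≤ extLen τ := hv.length_le.trans (length_take_le _ _)
  rw [prefix_iff_eq_take.1 hpre] at hzI ⊢
  rcases hvlen.lt_or_eq with hlt | heq
  · -- the prefix copy of `x(τ)` standardizes like the suffix copy, where the occurrence is interior
    refine absurd ?_ hzI
    have hwin := stdize_take_eq_of_stdize_eq (stdize_take_extLen τ) v.length
    rw [take_take, min_eq_left hvlen] at hwin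
    rw [hwin]
    exact pattLE_stdize_stdize_of_infix (window_infix_tail_dropLast (by omega) (by omega))
  · rw [heq, pattExterior]

lemma PattLE.eq_stdize_dropLast_or_eq_stdize_tail {σ τ : List ℕ} (h : PattLE σ τ)
    (hlen : σ.length + 1 = τ.length) : σ = stdize τ.dropLast ∨ σ = stdize τ.tail := by
  obtain ⟨u, hu, rfl⟩ := pattLE_iff.1 h
  rw [length_stdize] at hlen
  rcases infix_dropLast_or_infix_tail hu (by omega) with h | h
  · exact Or.inl (by rw [h.sublist.eq_of_length (by simp; omega)])
  · exact Or.inr (by rw [h.sublist.eq_of_length (by simp; omega)])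

end Occurrences

section Monotone

lemma getD_lt_getD_iff_of_pairwise_lt {τ : List ℕ} (hτ : τ.Pairwise (· < ·)) {i j : ℕ}
    (hi : i < τ.length) (hj : j < τ.length) : τ.getD i 0 < τ.getD j 0 ↔ i < j := by
  rw [pairwise_iff_getElem] at hτ
  rw [getD_eq_getElem _ _ hi, getD_eq_getElem _ _ hj]
  rcases lt_trichotomy i j with hij | rfl | hij
  · exact iff_of_true (hτ i j hi hj hij) hij
  · simp
  · exact iff_of_false (not_lt.2 (hτ j i hj hi hij).le) (by omega)

lemma getD_lt_getD_iff_of_pairwise_gt {τ : List ℕ} (hτ : τ.Pairwise (· > ·)) {i j : ℕ}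
    (hi : i < τ.length) (hj : j < τ.length) : τ.getD i 0 < τ.getD j 0 ↔ j < i := by
  rw [pairwise_iff_getElem] at hτ
  rw [getD_eq_getElem _ _ hi, getD_eq_getElem _ _ hj]
  rcases lt_trichotomy i j with hij | rfl | hij
  · exact iff_of_false (not_lt.2 (hτ i j hi hj hij).le) (by omega)
  · simp
  · exact iff_of_true (hτ j i hj hi hij) hij

lemma MonotoneList.getD_add_lt_getD_add_iff {τ : List ℕ} (h : MonotoneList τ) {a i j : ℕ}
    (hi : a + i < τ.length) (hj : a + j < τ.length) :
    τ.getD (a + i) 0 < τ.getD (a + j) 0 ↔ τ.getD i 0 < τ.getD j 0 := by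
  rcases h with h | h
  · have h := isChain_iff_pairwise.1 h
    rw [getD_lt_getD_iff_of_pairwise_lt h hi hj, getD_lt_getD_iff_of_pairwise_lt h (by omega)
      (by omega)]
    omega
  · have h := isChain_iff_pairwise.1 h
    rw [getD_lt_getD_iff_of_pairwise_gt h hi hj, getD_lt_getD_iff_of_pairwise_gt h (by omega)
      (by omega)]
    omega

lemma MonotoneList.stdize_window {τ : List ℕ} (h : MonotoneList τ) {a m : ℕ}
    (ham : a + m ≤ τ.length) : stdize ((τ.drop a).take m) = stdize (τ.take m) := by
  change _ = stdize ((τ.drop 0).take m)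
  refine stdize_eq_of_orderIsomorphic ⟨by simp; omega, fun i j hi hj => ?_⟩
  have hlen : ((τ.drop 0).take m).length = ((τ.drop a).take m).length := by simp; omega
  rw [getD_window hi, getD_window hj, getD_window (hlen ▸ hi), getD_window (hlen ▸ hj),
    zero_add, zero_add]
  simp only [length_take, length_drop] at hi hj
  exact h.getD_add_lt_getD_add_iff (by omega) (by omega)

lemma MonotoneList.eq_stdize_take {σ τ : List ℕ} (h : MonotoneList τ) (hσ : PattLE σ τ) :
    σ = stdize (τ.take σ.length) := by
  obtain ⟨u, hu, rfl⟩ := pattLE_iff.1 hσ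
  obtain ⟨a, ha, hu⟩ := exists_eq_window_of_infix hu
  rw [length_stdize, ← h.stdize_window ha, ← hu]

lemma MonotoneList.stdize_dropLast_eq_stdize_tail {τ : List ℕ} (h : MonotoneList τ) :
    stdize τ.dropLast = stdize τ.tail := by
  rcases eq_or_ne τ [] with rfl | hne
  · rfl
  have := length_pos_of_ne_nil hne
  rw [dropLast_eq_take, ← h.stdize_window (a := 1) (by omega), drop_one,
    take_of_length_le (by simp)]

lemma monotoneList_of_stdize_dropLast_eq_stdize_tail {τ : List ℕ} (hnd : τ.Nodup)
    (h : stdize τ.dropLast = stdize τ.tail) : MonotoneList τ := by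
  have hwin : stdize ((τ.drop 0).take (τ.length - 1)) =
      stdize ((τ.drop 1).take (τ.length - 1)) := by
    rwa [drop_one, take_of_length_le (l := τ.tail) (by simp), drop_zero, ← dropLast_eq_take]
  have hiso := (stdize_eq_stdize_iff (by simp)).1 hwin
  have hstep : ∀ i, i + 2 < τ.length →
      (τ.getD i 0 < τ.getD (i + 1) 0 ↔ τ.getD (i + 1) 0 < τ.getD (i + 2) 0) := by
    intro i hi
    have := hiso.2 i (i + 1) (by simp; omega) (by simp; omega)
    rw [getD_window (by simp; omega), getD_window (by simp; omega), getD_window (by simp; omega),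
      getD_window (by simp; omega), add_comm 1 i, add_comm 1 (i + 1)] at this
    simpa using this
  have hsame : ∀ i, i + 1 < τ.length →
      (τ.getD i 0 < τ.getD (i + 1) 0 ↔ τ.getD 0 0 < τ.getD 1 0) := by
    intro i
    induction i with
    | zero => simp
    | succ i ih => exact fun hi => (hstep i (by omega)).symm.trans (ih (by omega))
  have hne : ∀ i, i + 1 < τ.length → τ.getD i 0 ≠ τ.getD (i + 1) 0 := fun i hi heq => by
    rw [getD_eq_getElem _ _ (by omega), getD_eq_getElem _ _ hi, hnd.getElem_inj_iff] at heq
    omega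
  by_cases h01 : τ.getD 0 0 < τ.getD 1 0
  · refine Or.inl (isChain_iff_getElem.2 fun i hi => ?_)
    simpa [getD_eq_getElem, hi, (by omega : i < τ.length)] using (hsame i hi).2 h01
  · refine Or.inr (isChain_iff_getElem.2 fun i hi => ?_)
    have := (hsame i hi).not.2 h01
    have := hne i hi
    rw [getD_eq_getElem _ _ (by omega), getD_eq_getElem _ _ hi] at *
    omega

lemma monotoneList_iff_extLen_eq {τ : List ℕ} (hτ : IsPermList τ) :
    MonotoneList τ ↔ extLen τ = τ.length - 1 := by
  rw [extLen_eq_iff hτ.1]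
  exact ⟨MonotoneList.stdize_dropLast_eq_stdize_tail,
    monotoneList_of_stdize_dropLast_eq_stdize_tail hτ.nodup⟩

lemma MonotoneList.eq_pattInterior {σ τ : List ℕ} (h : MonotoneList τ) (hσ : PattLE σ τ)
    (hlen : σ.length + 2 = τ.length) : σ = pattInterior τ := by
  rw [h.eq_stdize_take hσ, pattInterior, ← drop_one, dropLast_eq_take, length_drop,
    h.stdize_window (by omega)]
  congr 2
  omega

end Monotone

section Intervals

lemma mem_pattInterval {z σ τ : List ℕ} : z ∈ pattInterval σ τ ↔ PattLE z τ ∧ PattLE σ z := by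
  rw [pattInterval, Finset.mem_filter, mem_toFinset]
  rfl

lemma pattInterval_eq_empty {σ τ : List ℕ} (h : ¬ PattLE σ τ) : pattInterval σ τ = ∅ :=
  Finset.eq_empty_of_forall_notMem fun _ hz =>
    h (pattLE_trans (mem_pattInterval.1 hz).2 (mem_pattInterval.1 hz).1)

lemma pattInterval_eq_insert {σ τ : List ℕ} (hτ : IsPermList τ) (h : PattLE σ τ) :
    pattInterval σ τ =
      insert τ (pattInterval σ (stdize τ.dropLast) ∪ pattInterval σ (stdize τ.tail)) := by
  ext z
  simp only [Finset.mem_insert, Finset.mem_union, mem_pattInterval]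
  constructor
  · rintro ⟨hzτ, hσz⟩
    rcases hzτ.length_le.lt_or_eq with hlt | heq
    · exact Or.inr ((hzτ.pattLE_dropLast_or_pattLE_tail hlt).imp (⟨·, hσz⟩) (⟨·, hσz⟩))
    · exact Or.inl (hzτ.eq_of_length_eq hτ heq)
  · rintro (rfl | ⟨hz, hσz⟩ | ⟨hz, hσz⟩)
    · exact ⟨pattLE_refl hτ, h⟩
    · exact ⟨pattLE_trans hz (pattLE_stdize_of_infix (dropLast_infix τ)), hσz⟩
    · exact ⟨pattLE_trans hz (pattLE_stdize_of_infix (tail_infix τ)), hσz⟩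

lemma notMem_pattInterval_of_length_lt {σ τ ρ : List ℕ} (h : ρ.length < τ.length) :
    τ ∉ pattInterval σ ρ :=
  fun hτ => absurd (mem_pattInterval.1 hτ).1.length_le (not_le.2 h)

lemma pattInterval_dropLast_inter_tail {σ τ : List ℕ} (hne : τ ≠ []) :
    pattInterval σ (stdize τ.dropLast) ∩ pattInterval σ (stdize τ.tail) =
      pattInterval σ (pattInterior τ) ∪
        (pattInterval σ (pattExterior τ)).filter (¬ PattLE · (pattInterior τ)) := by
  ext z
  simp only [Finset.mem_inter, Finset.mem_union, Finset.mem_filter, mem_pattInterval]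
  constructor
  · rintro ⟨⟨hzP, hσz⟩, hzS, -⟩
    by_cases hzI : PattLE z (pattInterior τ)
    · exact Or.inl ⟨hzI, hσz⟩
    · refine Or.inr ⟨⟨?_, hσz⟩, hzI⟩
      exact (PattLE.pattLE_pattExterior_or_pattLE_pattInterior hzP hzS).resolve_right hzI
  · rintro (⟨hzI, hσz⟩ | ⟨⟨hzX, hσz⟩, -⟩)
    · exact ⟨⟨pattLE_trans hzI (pattInterior_pattLE_dropLast τ), hσz⟩,
        pattLE_trans hzI (pattInterior_pattLE_tail τ), hσz⟩
    · exact ⟨⟨pattLE_trans hzX (pattExterior_pattLE_dropLast τ), hσz⟩,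
        pattLE_trans hzX (pattExterior_pattLE_tail hne), hσz⟩

lemma disjoint_pattInterval_filter_not_pattLE (σ ρ : List ℕ) (s : Finset (List ℕ)) :
    Disjoint (pattInterval σ ρ) (s.filter (¬ PattLE · ρ)) :=
  Finset.disjoint_left.2 fun _ hz hz' =>
    (Finset.mem_filter.1 hz').2 (mem_pattInterval.1 hz).1

lemma filter_pattInterval_pattExterior (σ τ : List ℕ) :
    (pattInterval σ (pattExterior τ)).filter (¬ PattLE · (pattInterior τ)) =
      if PattLE σ (pattExterior τ) ∧ ¬ PattLE (pattExterior τ) (pattInterior τ) then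
        {pattExterior τ} else ∅ := by
  ext z
  simp only [Finset.mem_filter, mem_pattInterval]
  split_ifs with hX
  · refine ⟨fun ⟨⟨hzX, _⟩, hzI⟩ => Finset.mem_singleton.2 ?_, fun hz => ?_⟩
    · exact eq_pattExterior_of_not_pattLE_pattInterior hzX hzI
    · obtain rfl := Finset.mem_singleton.1 hz
      exact ⟨⟨pattLE_stdize_stdize_of_infix (infix_refl _), hX.1⟩, hX.2⟩
  · refine ⟨fun ⟨⟨hzX, hσz⟩, hzI⟩ => ?_, fun hz => absurd hz (Finset.notMem_empty z)⟩
    obtain rfl := eq_pattExterior_of_not_pattLE_pattInterior hzX hzI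
    exact absurd ⟨hσz, hzI⟩ hX

end Intervals

section Mobius

instance (l : List ℕ) : Decidable (MonotoneList l) :=
  inferInstanceAs (Decidable (l.IsChain (· < ·) ∨ l.IsChain (· > ·)))

def IsPattMobius (μ : List ℕ → List ℕ → ℤ) : Prop :=
  ∀ σ τ : List ℕ, IsPermList σ → IsPermList τ → PattLE σ τ →
    ∑ z ∈ pattInterval σ τ, μ σ z = if σ = τ then 1 else 0

variable {μ : List ℕ → List ℕ → ℤ} {σ τ : List ℕ}

lemma IsPattMobius.sum_pattInterval_stdize (hμ : IsPattMobius μ) (hσ : IsPermList σ) {l : List ℕ}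
    (hl : l.Nodup) : ∑ z ∈ pattInterval σ (stdize l), μ σ z = if σ = stdize l then 1 else 0 := by
  by_cases hσl : PattLE σ (stdize l)
  · exact hμ σ _ hσ (hσl.isPermList hσ hl) hσl
  · rw [pattInterval_eq_empty hσl, Finset.sum_empty, if_neg]
    rintro rfl
    exact hσl (pattLE_refl hσ)

lemma IsPattMobius.apply_self (hμ : IsPattMobius μ) (hσ : IsPermList σ) : μ σ σ = 1 := by
  have hsingle : pattInterval σ σ = {σ} := by
    ext z
    simp only [mem_pattInterval, Finset.mem_singleton]
    refine ⟨fun ⟨hzσ, hσz⟩ => hzσ.eq_of_length_eq hσ (hzσ.length_le.antisymm hσz.length_le), ?_⟩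
    rintro rfl
    exact ⟨pattLE_refl hσ, pattLE_refl hσ⟩
  simpa [hsingle] using hμ σ σ hσ hσ (pattLE_refl hσ)

lemma IsPattMobius.apply_eq_of_ne (hμ : IsPattMobius μ) (hσ : IsPermList σ) (hτ : IsPermList τ)
    (hle : PattLE σ τ) (hne : σ ≠ τ) :
    μ σ τ = (if σ = pattInterior τ then 1 else 0) - (if σ = stdize τ.dropLast then 1 else 0)
      - (if σ = stdize τ.tail then 1 else 0)
      + if PattLE σ (pattExterior τ) ∧ ¬ PattLE (pattExterior τ) (pattInterior τ) then
          μ σ (pattExterior τ) else 0 := by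
  have hnd := hτ.nodup
  have hpos := length_pos_of_ne_nil hτ.1
  have hsum := hμ σ τ hσ hτ hle
  rw [if_neg hne, pattInterval_eq_insert hτ hle, Finset.sum_insert
    (Finset.notMem_union.2 ⟨notMem_pattInterval_of_length_lt (by simp; omega),
      notMem_pattInterval_of_length_lt (by simp; omega)⟩)] at hsum
  have hunion := Finset.sum_union_inter (f := μ σ) (s₁ := pattInterval σ (stdize τ.dropLast))
    (s₂ := pattInterval σ (stdize τ.tail))
  rw [pattInterval_dropLast_inter_tail hτ.1, Finset.sum_union
    (disjoint_pattInterval_filter_not_pattLE _ _ _), filter_pattInterval_pattExterior,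
    hμ.sum_pattInterval_stdize hσ (hnd.sublist (dropLast_sublist τ)),
    hμ.sum_pattInterval_stdize hσ (hnd.sublist (tail_sublist τ))] at hunion
  have hI : ∑ z ∈ pattInterval σ (pattInterior τ), μ σ z =
      if σ = pattInterior τ then 1 else 0 :=
    hμ.sum_pattInterval_stdize hσ (hnd.sublist ((dropLast_sublist _).trans (tail_sublist τ)))
  have hX : ∑ z ∈ (if PattLE σ (pattExterior τ) ∧ ¬ PattLE (pattExterior τ) (pattInterior τ) then
      {pattExterior τ} else ∅), μ σ z =
      if PattLE σ (pattExterior τ) ∧ ¬ PattLE (pattExterior τ) (pattInterior τ) then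
        μ σ (pattExterior τ) else 0 := by
    split_ifs <;> simp
  rw [hI, hX] at hunion
  linarith

lemma IsPattMobius.apply_of_length_add_one (hμ : IsPattMobius μ) (hσ : IsPermList σ)
    (hτ : IsPermList τ) (hle : PattLE σ τ) (hlen : σ.length + 1 = τ.length) : μ σ τ = -1 := by
  have hσpos := length_pos_of_ne_nil hσ.1
  have hI : σ ≠ pattInterior τ := ne_of_length_ne (by rw [length_pattInterior]; omega)
  rw [hμ.apply_eq_of_ne hσ hτ hle (by rintro rfl; omega), if_neg hI]
  by_cases hPS : stdize τ.dropLast = stdize τ.tail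
  · have hσP : σ = stdize τ.dropLast := (hle.eq_stdize_dropLast_or_eq_stdize_tail hlen).elim id
      (·.trans hPS.symm)
    have hX : pattExterior τ = σ := by
      rw [pattExterior_eq_of_extLen_eq ((extLen_eq_iff hτ.1).2 hPS), hσP]
    have hXI : ¬ PattLE (pattExterior τ) (pattInterior τ) := fun h => by
      have := h.length_le
      rw [hX, length_pattInterior] at this
      omega
    rw [if_pos hσP, if_pos (hσP.trans hPS), hX, if_pos ⟨pattLE_refl hσ, hX ▸ hXI⟩,
      hμ.apply_self hσ]
    norm_num
  · have hext : extLen τ ≠ τ.length - 1 := mt (extLen_eq_iff hτ.1).1 hPS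
    have hσX : ¬ PattLE σ (pattExterior τ) := fun h => by
      have := extLen_le τ
      have := length_pattExterior τ ▸ h.length_le
      omega
    rw [if_neg (not_and_of_not_left _ hσX)]
    rcases hle.eq_stdize_dropLast_or_eq_stdize_tail hlen with rfl | rfl
    · rw [if_pos rfl, if_neg hPS]
      norm_num
    · rw [if_pos rfl, if_neg (Ne.symm hPS)]
      norm_num

lemma IsPattMobius.apply_of_length_add_two (hμ : IsPattMobius μ) (hσ : IsPermList σ)
    (hτ : IsPermList τ) (hle : PattLE σ τ) (hlen : σ.length + 2 = τ.length) :
    μ σ τ = if ¬ MonotoneList τ ∧ (σ = pattInterior τ ∨ σ = pattExterior τ) then 1 else 0 := by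
  rw [hμ.apply_eq_of_ne hσ hτ hle (by rintro rfl; omega),
    if_neg (ne_of_length_ne (by simp; omega) : σ ≠ stdize τ.dropLast),
    if_neg (ne_of_length_ne (by simp; omega) : σ ≠ stdize τ.tail)]
  have hX := length_pattExterior τ
  have hI := length_pattInterior τ
  have := extLen_le τ
  by_cases hm : MonotoneList τ
  · have hext := (monotoneList_iff_extLen_eq hτ).1 hm
    have hσX : PattLE σ (pattExterior τ) := by
      rw [hm.eq_stdize_take hle, pattExterior]
      exact pattLE_stdize_stdize_of_infix (take_prefix_take_left (by omega)).isInfix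
    have hXI : ¬ PattLE (pattExterior τ) (pattInterior τ) := fun h => by
      have := h.length_le
      omega
    have hμX : μ σ (pattExterior τ) = -1 :=
      hμ.apply_of_length_add_one hσ (hσX.isPermList hσ (hτ.nodup.sublist (take_sublist _ _)))
        hσX (by omega)
    rw [if_pos (hm.eq_pattInterior hle hlen), if_pos ⟨hσX, hXI⟩, hμX, if_neg (fun h => h.1 hm)]
    norm_num
  have hext : extLen τ ≠ τ.length - 1 := mt (monotoneList_iff_extLen_eq hτ).2 hm
  by_cases hc : PattLE σ (pattExterior τ) ∧ ¬ PattLE (pattExterior τ) (pattInterior τ)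
  · have hσX : σ = pattExterior τ :=
      hc.1.eq_of_length_eq (hc.1.isPermList hσ (hτ.nodup.sublist (take_sublist _ _)))
        (by have := hc.1.length_le; omega)
    have hσI : σ ≠ pattInterior τ := fun h => hc.2 (hσX ▸ h ▸ pattLE_refl hσ)
    rw [if_neg hσI, if_pos hc, ← hσX, hμ.apply_self hσ, if_pos ⟨hm, Or.inr rfl⟩]
    norm_num
  · -- if `σ = x(τ)` then `x(τ) ≤ i(τ)` has the length of `i(τ)`, so `σ = i(τ)` anyway
    have hXI : σ = pattExterior τ → σ = pattInterior τ := fun hσX => by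
      have hle' : PattLE σ (pattInterior τ) := hσX ▸ not_and_not_right.1 hc (hσX ▸ pattLE_refl hσ)
      rw [hle'.eq_stdize_of_length_eq (by omega), pattInterior, stdize_stdize]
    simp only [if_neg hc, add_zero, sub_zero, hm, not_false_eq_true, true_and]
    exact if_congr ⟨Or.inl, fun h => h.elim id hXI⟩ rfl rfl

lemma IsPattMobius.apply_of_length_add_three_le (hμ : IsPattMobius μ) (hσ : IsPermList σ)
    (hτ : IsPermList τ) (hle : PattLE σ τ) (hlen : σ.length + 3 ≤ τ.length) :
    μ σ τ = if PattLE σ (pattExterior τ) ∧ ¬ PattLE (pattExterior τ) (pattInterior τ) then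
      μ σ (pattExterior τ) else 0 := by
  rw [hμ.apply_eq_of_ne hσ hτ hle (by rintro rfl; omega),
    if_neg (ne_of_length_ne (by rw [length_pattInterior]; omega) : σ ≠ pattInterior τ),
    if_neg (ne_of_length_ne (by simp; omega) : σ ≠ stdize τ.dropLast),
    if_neg (ne_of_length_ne (by simp; omega) : σ ≠ stdize τ.tail)]
  ring

end Mobius

/-- Theorem (Bernini–Ferrari–Steingrímsson): the Möbius function of the consecutive
pattern poset.  Here `μ` is any function satisfying the defining recursion of the
Möbius function of this (locally finite) poset. -/
theorem mobius_consecutive_pattern_poset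
    (μ : List ℕ → List ℕ → ℤ)
    (hμ : ∀ σ τ : List ℕ, IsPermList σ → IsPermList τ → PattLE σ τ →
      ∑ z ∈ pattInterval σ τ, μ σ z = if σ = τ then 1 else 0) :
    ∀ σ τ : List ℕ, IsPermList σ → IsPermList τ → PattLE σ τ →
      ((2 < τ.length - σ.length ∧ PattLE σ (pattExterior τ) ∧
          ¬ PattLE (pattExterior τ) (pattInterior τ) →
          μ σ τ = μ σ (pattExterior τ)) ∧
       (τ.length - σ.length = 2 ∧ ¬ MonotoneList τ ∧
          (σ = pattInterior τ ∨ σ = pattExterior τ) →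
          μ σ τ = 1) ∧
       (τ.length - σ.length < 2 → μ σ τ = (-1) ^ (τ.length - σ.length)) ∧
       (¬ (2 < τ.length - σ.length ∧ PattLE σ (pattExterior τ) ∧
            ¬ PattLE (pattExterior τ) (pattInterior τ)) →
        ¬ (τ.length - σ.length = 2 ∧ ¬ MonotoneList τ ∧
            (σ = pattInterior τ ∨ σ = pattExterior τ)) →
        ¬ (τ.length - σ.length < 2) →
        μ σ τ = 0)) := by
  replace hμ : IsPattMobius μ := hμ
  intro σ τ hσ hτ hle
  have hlen := hle.length_le
  refine ⟨fun ⟨_, hc⟩ => ?_, fun ⟨_, hc⟩ => ?_, fun _ => ?_, fun h₁ h₂ _ => ?_⟩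
  · rw [hμ.apply_of_length_add_three_le hσ hτ hle (by omega), if_pos hc]
  · rw [hμ.apply_of_length_add_two hσ hτ hle (by omega), if_pos hc]
  · rcases (by omega : σ.length = τ.length ∨ σ.length + 1 = τ.length) with h | h
    · obtain rfl := hle.eq_of_length_eq hτ h
      rw [hμ.apply_self hσ, Nat.sub_self, pow_zero]
    · rw [hμ.apply_of_length_add_one hσ hτ hle h, show τ.length - σ.length = 1 by omega, pow_one]
  · rcases (by omega : σ.length + 2 = τ.length ∨ σ.length + 3 ≤ τ.length) with h | h
    · rw [hμ.apply_of_length_add_two hσ hτ hle h, if_neg fun hc => h₂ ⟨by omega, hc⟩]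
    · rw [hμ.apply_of_length_add_three_le hσ hτ hle h, if_neg fun hc => h₁ ⟨by omega, hc⟩]
end

section
/- For all u ≤ w in factor order on A*, the Möbius function satisfies μ(u,w) ∈ {−1, 0, 1}. -/
/-- All contiguous subwords (factors) of a word, including the empty word. -/
def factors {A : Type*} (w : List A) : List (List A) := w.inits.flatMap List.tails

/-- The closed interval `[u,w]` in factor order, as a `Finset`. -/
def factorInterval {A : Type*} [DecidableEq A] (u w : List A) : Finset (List A) :=
  (factors w).toFinset.filter (fun z => u <:+: z)

/-- A word is flat if all of its letters are equal. -/
def Flat {A : Type*} (w : List A) : Prop := ∀ x ∈ w, ∀ y ∈ w, x = y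

/-- Length of the longest proper prefix of `w` that is also a suffix of `w`. -/
def outerLen {A : Type*} [DecidableEq A] (w : List A) : ℕ :=
  Nat.findGreatest (fun k => w.take k = w.drop (w.length - k)) (w.length - 1)

/-- The outer word `o(w)`: the longest word (possibly empty) that is both a proper
prefix and a suffix of `w`. -/
def outerWord {A : Type*} [DecidableEq A] (w : List A) : List A := w.take (outerLen w)

/-- The inner word `i(w) = w(2)…w(n−1)`. -/
def innerWord {A : Type*} (w : List A) : List A := w.tail.dropLast

/-!
Every proper factor of `w` is a factor of `w` without its last letter or of `w` without its first
letter, and the common factors of these two words are the factors of `i(w)` and of `o(w)`. If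
`o(w)` is not a factor of `i(w)`, the factors of `o(w)` lying below `i(w)` are exactly its proper
factors. Inclusion–exclusion in the defining recursion therefore gives
`μ(u,w) = δ(u,i(w)) − δ(u,w.dropLast) − δ(u,w.tail) + [o(w) ≰ i(w), u ≤ o(w)] μ(u,o(w))`.
Now induct on `|w|`: if `w` covers `u` then `μ(u,w) = −1`; otherwise `μ(u,w)` is `δ(u,i(w))` plus
either `0` or `μ(u,o(w))`, and when `u = i(w)` and the second term is present, `o(w)` covers `u`.
-/

namespace List

variable {α : Type*} {l l₁ l₂ : List α}

theorem IsInfix.length_lt_of_ne (h : l₁ <:+: l₂) (hne : l₁ ≠ l₂) : l₁.length < l₂.length :=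
  lt_of_le_of_ne h.length_le (mt h.eq_of_length hne)

theorem IsInfix.isPrefix_or_infix_tail (h : l₁ <:+: l₂) : l₁ <+: l₂ ∨ l₁ <:+: l₂.tail := by
  cases l₂ with
  | nil => exact .inr h
  | cons a l₂ => exact infix_cons_iff.mp h

theorem IsInfix.isSuffix_or_infix_dropLast (h : l₁ <:+: l₂) : l₁ <:+ l₂ ∨ l₁ <:+: l₂.dropLast := by
  rcases eq_nil_or_concat l₂ with rfl | ⟨l₂, a, rfl⟩
  · exact .inr h
  · rw [concat_eq_append] at h ⊢
    rw [dropLast_concat]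
    exact infix_concat_iff.mp h

theorem IsPrefix.tail (h : l₁ <+: l₂) : l₁.tail <+: l₂.tail := by
  obtain ⟨t, rfl⟩ := h
  cases l₁ with
  | nil => exact nil_prefix
  | cons a l₁ => exact prefix_append l₁ t

theorem IsSuffix.dropLast (h : l₁ <:+ l₂) : l₁.dropLast <:+ l₂.dropLast := by
  obtain ⟨s, rfl⟩ := h
  rcases eq_nil_or_concat l₁ with rfl | ⟨l₁, a, rfl⟩
  · exact nil_suffix
  · rw [concat_eq_append, ← append_assoc, dropLast_concat, dropLast_concat]
    exact suffix_append s l₁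

theorem infix_and_ne_iff (hl : l ≠ []) :
    l₁ <:+: l ∧ l₁ ≠ l ↔ l₁ <:+: l.dropLast ∨ l₁ <:+: l.tail := by
  have hpos : 0 < l.length := length_pos_iff.mpr hl
  constructor
  · rintro ⟨h, hne⟩
    have hlt := h.length_lt_of_ne hne
    refine h.isPrefix_or_infix_tail.imp_left fun hp => ?_
    rw [dropLast_eq_take]
    exact (prefix_take_iff.mpr ⟨hp, by omega⟩).isInfix
  · rintro (h | h)
    · refine ⟨h.trans (dropLast_prefix l).isInfix, fun he => ?_⟩
      have := h.length_le
      rw [he, length_dropLast] at this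
      omega
    · refine ⟨h.trans (tail_suffix l).isInfix, fun he => ?_⟩
      have := h.length_le
      rw [he, length_tail] at this
      omega

end List

open List

section Words

variable {A : Type*}

theorem mem_factors {w z : List A} : z ∈ factors w ↔ z <:+: w := by
  simp only [factors, mem_flatMap, mem_inits, mem_tails]
  constructor
  · rintro ⟨p, hp, hz⟩
    exact hz.isInfix.trans hp.isInfix
  · rintro ⟨s, t, rfl⟩
    exact ⟨s ++ z, prefix_append _ t, suffix_append s z⟩

theorem length_innerWord (w : List A) : (innerWord w).length = w.length - 2 := by
  simp only [innerWord, length_dropLast, length_tail]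
  omega

theorem innerWord_infix_dropLast (w : List A) : innerWord w <:+: w.dropLast := by
  rw [innerWord, ← tail_dropLast]
  exact (tail_suffix _).isInfix

theorem innerWord_infix_tail (w : List A) : innerWord w <:+: w.tail :=
  (dropLast_prefix _).isInfix

variable [DecidableEq A]

theorem outerWord_prefix_dropLast (w : List A) : outerWord w <+: w.dropLast := by
  rw [outerWord, dropLast_eq_take]
  exact take_prefix_take_left (Nat.findGreatest_le _)

theorem outerWord_suffix_tail (w : List A) : outerWord w <:+ w.tail := by
  have hborder : w.take (outerLen w) = w.drop (w.length - outerLen w) :=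
    Nat.findGreatest_spec (P := fun k => w.take k = w.drop (w.length - k)) (Nat.zero_le _)
      (by simp)
  rw [outerWord, hborder, ← drop_one]
  rcases eq_or_ne w [] with rfl | hw
  · simp
  · have := length_pos_iff.mpr hw
    have : outerLen w ≤ w.length - 1 := Nat.findGreatest_le _
    rw [show w.length - outerLen w = 1 + (w.length - outerLen w - 1) by omega, ← drop_drop]
    exact drop_suffix _ _

theorem prefix_outerWord_of_prefix_dropLast_of_suffix_tail {w z : List A}
    (hp : z <+: w.dropLast) (hs : z <:+ w.tail) : z <+: outerWord w := by
  have hlen : z.length ≤ w.length - 1 := length_dropLast (xs := w) ▸ hp.length_le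
  have hzw : z <+: w := hp.trans (dropLast_prefix w)
  have hborder : z.length ≤ outerLen w := by
    refine Nat.le_findGreatest hlen ?_
    rw [← prefix_iff_eq_take.mp hzw, ← suffix_iff_eq_drop.mp (hs.trans (tail_suffix w))]
  exact prefix_take_iff.mpr ⟨hzw, hborder⟩

theorem infix_dropLast_and_infix_tail_iff {w z : List A} :
    z <:+: w.dropLast ∧ z <:+: w.tail ↔ z <:+: innerWord w ∨ z <:+: outerWord w := by
  constructor
  · rintro ⟨hd, ht⟩
    rcases hd.isPrefix_or_infix_tail with hp | hd'
    · rcases ht.isSuffix_or_infix_dropLast with hs | ht'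
      · exact .inr (prefix_outerWord_of_prefix_dropLast_of_suffix_tail hp hs).isInfix
      · exact .inl ht'
    · rw [tail_dropLast] at hd'
      exact .inl hd'
  · rintro (h | h)
    · exact ⟨h.trans (innerWord_infix_dropLast w), h.trans (innerWord_infix_tail w)⟩
    · exact ⟨h.trans (outerWord_prefix_dropLast w).isInfix,
        h.trans (outerWord_suffix_tail w).isInfix⟩

theorem infix_innerWord_of_infix_outerWord_of_ne {w z : List A} (h : z <:+: outerWord w)
    (hne : z ≠ outerWord w) : z <:+: innerWord w := by
  have ho : outerWord w ≠ [] := by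
    rintro ho
    exact hne (by rw [ho] at h ⊢; exact eq_nil_of_infix_nil h)
  rcases (infix_and_ne_iff ho).mp ⟨h, hne⟩ with h | h
  · exact h.trans (outerWord_suffix_tail w).dropLast.isInfix
  · rw [innerWord, ← tail_dropLast]
    exact h.trans (outerWord_prefix_dropLast w).tail.isInfix

end Words

section FactorInterval

variable {A : Type*} [DecidableEq A] {u w : List A}

theorem mem_factorInterval {z : List A} : z ∈ factorInterval u w ↔ z <:+: w ∧ u <:+: z := by
  simp [factorInterval, mem_factors]

theorem factorInterval_eq_empty (h : ¬u <:+: w) : factorInterval u w = ∅ :=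
  Finset.eq_empty_of_forall_notMem fun _ hz =>
    h ((mem_factorInterval.mp hz).2.trans (mem_factorInterval.mp hz).1)

theorem factorInterval_self (u : List A) : factorInterval u u = {u} := by
  ext z
  simp only [mem_factorInterval, Finset.mem_singleton]
  exact ⟨fun ⟨hzu, huz⟩ => hzu.eq_of_length (hzu.length_le.antisymm huz.length_le),
    fun hz => hz ▸ ⟨infix_refl z, infix_refl z⟩⟩

theorem factorInterval_of_length_eq_succ (h : u <:+: w) (hlen : w.length = u.length + 1) :
    factorInterval u w = {u, w} := by
  ext z
  simp only [mem_factorInterval, Finset.mem_insert, Finset.mem_singleton]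
  constructor
  · rintro ⟨hzw, huz⟩
    rcases Nat.eq_or_lt_of_le huz.length_le with hl | hl
    · exact .inl (huz.eq_of_length hl).symm
    · exact .inr (hzw.eq_of_length (by have := hzw.length_le; omega))
  · rintro (rfl | rfl)
    · exact ⟨h, infix_refl z⟩
    · exact ⟨infix_refl z, h⟩

theorem erase_factorInterval (hw : w ≠ []) :
    (factorInterval u w).erase w = factorInterval u w.dropLast ∪ factorInterval u w.tail := by
  ext z
  simp only [Finset.mem_erase, Finset.mem_union, mem_factorInterval, ← or_and_right,
    ← infix_and_ne_iff hw]
  tauto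

theorem factorInterval_dropLast_inter_tail :
    factorInterval u w.dropLast ∩ factorInterval u w.tail =
      factorInterval u (innerWord w) ∪ factorInterval u (outerWord w) := by
  ext z
  simp only [Finset.mem_inter, Finset.mem_union, mem_factorInterval, ← or_and_right,
    ← infix_dropLast_and_infix_tail_iff]
  tauto

theorem factorInterval_innerWord_inter_outerWord_of_not_infix
    (h : ¬outerWord w <:+: innerWord w) :
    factorInterval u (innerWord w) ∩ factorInterval u (outerWord w) =
      (factorInterval u (outerWord w)).erase (outerWord w) := by
  ext z
  simp only [Finset.mem_inter, Finset.mem_erase, mem_factorInterval]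
  constructor
  · rintro ⟨⟨hzi, _⟩, hzo, huz⟩
    exact ⟨fun he => h (he ▸ hzi), hzo, huz⟩
  · rintro ⟨hne, hzo, huz⟩
    exact ⟨⟨infix_innerWord_of_infix_outerWord_of_ne hzo hne, huz⟩, hzo, huz⟩

end FactorInterval

def IsFactorMobius {A : Type*} [DecidableEq A] (μ : List A → List A → ℤ) : Prop :=
  ∀ u w : List A, u <:+: w → ∑ z ∈ factorInterval u w, μ u z = if u = w then 1 else 0

namespace IsFactorMobius

variable {A : Type*} [DecidableEq A] {μ : List A → List A → ℤ} {u w : List A}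

theorem sum_factorInterval (hμ : IsFactorMobius μ) (u v : List A) :
    ∑ z ∈ factorInterval u v, μ u z = if u = v then 1 else 0 := by
  by_cases h : u <:+: v
  · exact hμ u v h
  · rw [factorInterval_eq_empty h, Finset.sum_empty, if_neg]
    rintro rfl
    exact h (infix_refl u)

theorem apply_self (hμ : IsFactorMobius μ) (u : List A) : μ u u = 1 := by
  simpa [factorInterval_self] using hμ u u (infix_refl u)

theorem apply_of_length_eq_succ (hμ : IsFactorMobius μ) (h : u <:+: w)
    (hlen : w.length = u.length + 1) : μ u w = -1 := by
  have hne : u ≠ w := fun he => by simp [he] at hlen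
  have := hμ u w h
  rw [factorInterval_of_length_eq_succ h hlen, Finset.sum_pair hne, hμ.apply_self, if_neg hne]
    at this
  omega

theorem sum_factorInterval_innerWord_inter_outerWord (hμ : IsFactorMobius μ) (u w : List A) :
    ∑ z ∈ factorInterval u (innerWord w) ∩ factorInterval u (outerWord w), μ u z =
      (if u = outerWord w then 1 else 0) -
        if ¬outerWord w <:+: innerWord w ∧ u <:+: outerWord w then μ u (outerWord w) else 0 := by
  by_cases hoi : outerWord w <:+: innerWord w
  · have hsub : factorInterval u (outerWord w) ⊆ factorInterval u (innerWord w) := fun z hz => by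
      rw [mem_factorInterval] at hz ⊢
      exact ⟨hz.1.trans hoi, hz.2⟩
    have hcond : ¬(¬outerWord w <:+: innerWord w ∧ u <:+: outerWord w) := fun h => h.1 hoi
    rw [Finset.inter_eq_right.mpr hsub, hμ.sum_factorInterval, if_neg hcond, sub_zero]
  by_cases huo : u <:+: outerWord w
  · have hmem : outerWord w ∈ factorInterval u (outerWord w) :=
      mem_factorInterval.mpr ⟨infix_refl _, huo⟩
    have hcond : ¬outerWord w <:+: innerWord w ∧ u <:+: outerWord w := ⟨hoi, huo⟩
    rw [factorInterval_innerWord_inter_outerWord_of_not_infix hoi, Finset.sum_erase_eq_sub hmem,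
      hμ.sum_factorInterval, if_pos hcond]
  · have hne : u ≠ outerWord w := fun he => huo (he ▸ infix_refl u)
    have hcond : ¬(¬outerWord w <:+: innerWord w ∧ u <:+: outerWord w) := fun h => huo h.2
    rw [factorInterval_eq_empty huo, Finset.inter_empty, Finset.sum_empty, if_neg hne,
      if_neg hcond, sub_zero]

theorem apply_eq (hμ : IsFactorMobius μ) (h : u <:+: w) (hne : u ≠ w) :
    μ u w = (if u = innerWord w then 1 else 0) - (if u = w.dropLast then 1 else 0) -
      (if u = w.tail then 1 else 0) +
        if ¬outerWord w <:+: innerWord w ∧ u <:+: outerWord w then μ u (outerWord w) else 0 := by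
  have hw : w ≠ [] := by
    rintro rfl
    exact hne (eq_nil_of_infix_nil h)
  have hwhole := hμ u w h
  rw [if_neg hne, ← Finset.add_sum_erase _ _ (mem_factorInterval.mpr ⟨infix_refl w, h⟩),
    erase_factorInterval hw] at hwhole
  have hproper := Finset.sum_union_inter (s₁ := factorInterval u w.dropLast)
    (s₂ := factorInterval u w.tail) (f := μ u)
  have hcommon := Finset.sum_union_inter (s₁ := factorInterval u (innerWord w))
    (s₂ := factorInterval u (outerWord w)) (f := μ u)
  rw [factorInterval_dropLast_inter_tail] at hproper
  rw [hμ.sum_factorInterval_innerWord_inter_outerWord] at hcommon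
  simp only [hμ.sum_factorInterval] at hproper hcommon
  linarith

theorem apply_eq_of_length_add_two_le (hμ : IsFactorMobius μ) (h : u <:+: w)
    (hlen : u.length + 2 ≤ w.length) :
    μ u w = (if u = innerWord w then 1 else 0) +
      if ¬outerWord w <:+: innerWord w ∧ u <:+: outerWord w then μ u (outerWord w) else 0 := by
  have hshort : ∀ v : List A, v.length = w.length - 1 → u ≠ v := fun v hv he => by
    rw [he] at hlen
    omega
  rw [hμ.apply_eq h (fun he => by subst he; omega), if_neg (hshort _ length_dropLast),
    if_neg (hshort _ length_tail), sub_zero, sub_zero]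

end IsFactorMobius

/-- The Möbius function of factor order only takes the values −1, 0, 1. -/
theorem mobius_factor_order_values {A : Type*} [DecidableEq A]
    (μ : List A → List A → ℤ)
    (hμ : ∀ u w : List A, u <:+: w →
      ∑ z ∈ factorInterval u w, μ u z = if u = w then 1 else 0) :
    ∀ u w : List A, u <:+: w → μ u w = -1 ∨ μ u w = 0 ∨ μ u w = 1 := by
  have hμ : IsFactorMobius μ := hμ
  intro u w huw
  induction hn : w.length using Nat.strong_induction_on generalizing u w with
  | _ n ih =>
    subst hn
    obtain rfl | hne := eq_or_ne u w
    · exact .inr (.inr (hμ.apply_self u))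
    obtain hcover | hlen : w.length = u.length + 1 ∨ u.length + 2 ≤ w.length := by
      have := huw.length_lt_of_ne hne
      omega
    · exact .inl (hμ.apply_of_length_eq_succ huw hcover)
    have houter : (outerWord w).length ≤ w.length - 1 :=
      length_dropLast (xs := w) ▸ (outerWord_prefix_dropLast w).length_le
    rw [hμ.apply_eq_of_length_add_two_le huw hlen]
    split_ifs with hinner hcond hcond
    · -- `o(w)` properly contains `u = i(w)` and is at most one letter longer, so it covers `u`.
      have := hcond.2.length_lt_of_ne fun he => hcond.1 (he ▸ hinner ▸ infix_refl u)
      have := length_innerWord w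
      rw [hμ.apply_of_length_eq_succ hcond.2 (by subst hinner; omega)]
      norm_num
    · norm_num
    · simpa using ih _ (by omega) u (outerWord w) hcond.2 rfl
    · norm_num
end
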